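/- Let k \geq 3, n - k \geq 1, and G = L_c(S(CS_{k,n-k})). Then the number of edges of G equals \frac{1}{2}(n^2 + k^2 + 11n - 7k - 2nk + 4). -/

import Mathlib

open scoped Classical
open Finset

noncomputable section

namespace Zagreb

variable {V : Type*}

/-- First Zagreb index. -/
def M1 (G : SimpleGraph V) [Fintype V] : ℕ :=
  ∑ v, (G.degree v) ^ 2

/-- Second Zagreb index. -/
def M2 (G : SimpleGraph V) [Fintype V] : ℕ :=
  ∑ e ∈ G.edgeFinset,
    Sym2.lift ⟨fun u v => G.degree u * G.degree v, fun _ _ => mul_comm _ _⟩ e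

/-- First Zagreb coindex: sum over unordered pairs of distinct non-adjacent vertices. -/
def M1bar (G : SimpleGraph V) [Fintype V] : ℕ :=
  ∑ e ∈ Gᶜ.edgeFinset,
    Sym2.lift ⟨fun u v => G.degree u + G.degree v, fun _ _ => add_comm _ _⟩ e

/-- Second Zagreb coindex. -/
def M2bar (G : SimpleGraph V) [Fintype V] : ℕ :=
  ∑ e ∈ Gᶜ.edgeFinset,
    Sym2.lift ⟨fun u v => G.degree u * G.degree v, fun _ _ => mul_comm _ _⟩ e

/-- The cycle-star graph: a cycle of length `k` together with `l` leaves
attached to the cycle vertex `0`. -/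
def cycleStar (k l : ℕ) : SimpleGraph (Fin k ⊕ Fin l) where
  Adj x y :=
    match x, y with
    | Sum.inl i, Sum.inl j => i ≠ j ∧ ((i.val + 1) % k = j.val ∨ (j.val + 1) % k = i.val)
    | Sum.inl i, Sum.inr _ => i.val = 0
    | Sum.inr _, Sum.inl i => i.val = 0
    | Sum.inr _, Sum.inr _ => False
  symm := by
    constructor
    rintro (i | a) (j | b) h
    · exact ⟨Ne.symm h.1, h.2.symm⟩
    · exact h
    · exact h
    · exact h
  loopless := by
    constructor
    rintro (i | a) h
    · exact h.1 rfl
    · exact h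

/-- The subdivision graph: each edge is replaced by a path of length 2. -/
def subdivision (G : SimpleGraph V) : SimpleGraph (V ⊕ G.edgeSet) where
  Adj x y :=
    match x, y with
    | Sum.inl v, Sum.inr e => v ∈ (e : Sym2 V)
    | Sum.inr e, Sum.inl v => v ∈ (e : Sym2 V)
    | _, _ => False
  symm := by constructor; rintro (v | e) (w | f) h <;> simp_all
  loopless := by constructor; rintro (v | e) h <;> simp_all

/-- The line graph of `G`. -/
def lineGraph (G : SimpleGraph V) : SimpleGraph G.edgeSet where
  Adj e f := e ≠ f ∧ ∃ v, v ∈ (e : Sym2 V) ∧ v ∈ (f : Sym2 V)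
  symm := by
    constructor
    rintro e f ⟨hne, v, hv1, hv2⟩
    exact ⟨hne.symm, v, hv2, hv1⟩
  loopless := by constructor; rintro e ⟨hne, _⟩; exact hne rfl

/-- A cut-vertex: a vertex of a connected graph whose removal disconnects it. -/
def IsCutVertex (G : SimpleGraph V) (v : V) : Prop :=
  G.Connected ∧ ¬ (G.induce {u | u ≠ v}).Connected

/-- The line cut-vertex graph of `G`: vertices are the edges and cut-vertices of `G`;
two vertices are adjacent iff the corresponding edges share an endpoint, or one is
an edge incident to the other, a cut-vertex. -/
def lineCutGraph (G : SimpleGraph V) :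
    SimpleGraph (G.edgeSet ⊕ {v : V // IsCutVertex G v}) where
  Adj x y :=
    match x, y with
    | Sum.inl e, Sum.inl f => e ≠ f ∧ ∃ v, v ∈ (e : Sym2 V) ∧ v ∈ (f : Sym2 V)
    | Sum.inl e, Sum.inr c => (c : V) ∈ (e : Sym2 V)
    | Sum.inr c, Sum.inl e => (c : V) ∈ (e : Sym2 V)
    | Sum.inr _, Sum.inr _ => False
  symm := by
    constructor
    rintro (e | c) (f | d) h
    · exact ⟨Ne.symm h.1, h.2.choose, h.2.choose_spec.2, h.2.choose_spec.1⟩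
    · exact h
    · exact h
    · exact h
  loopless := by
    constructor
    rintro (e | c) h
    · exact h.1 rfl
    · exact h

end Zagreb

/-!
Double counting degrees in `L_c(H)`: the edge `uv` of `H` is adjacent to the
`deg u + deg v - 2` other edges at `u` or `v` and to those of `u`, `v` that are cut vertices,
while a cut vertex `c` is adjacent to its `deg c` edges. The handshake lemma then gives
`2 |E(L_c H)| + 2 |E(H)| = M₁(H) + 2 ∑_{c cut} deg c`. For `H = S(G)` one has
`|E(H)| = 2 |E(G)|` and `M₁(H) = M₁(G) + 4 |E(G)|`, and for `G = CS_{k,l}` (with `l = n - k`)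
`|E(G)| = k + l` and `M₁(G) = l² + 5l + 4k`.

The cut vertices of `S(CS_{k,l})` are the centre, of degree `l + 2`, and the `l` subdivision
vertices of the pendant edges, of degree `2`. Any other vertex lies on the subdivided `2k`-cycle
or is a leaf, and after removing it every vertex still reaches the centre, along one of the two
arcs of the cycle or through its pendant edge. Altogether `2 |E(L_c H)| = l² + 11l + 4k + 4`.
-/

section FinCycle

variable {k : ℕ}

instance [Fact (3 ≤ k)] : NeZero k := ⟨by have := (Fact.out : 3 ≤ k); omega⟩

lemma Fin.one_ne_zero_of_three_le [Fact (3 ≤ k)] : (1 : Fin k) ≠ 0 := by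
  have := (Fact.out : 3 ≤ k)
  simp [Fin.ext_iff, Nat.mod_eq_of_lt (by omega : 1 < k)]

lemma Fin.two_ne_zero_of_three_le [Fact (3 ≤ k)] : (2 : Fin k) ≠ 0 := by
  have := (Fact.out : 3 ≤ k)
  simp [Fin.ext_iff, Nat.mod_eq_of_lt (by omega : 2 < k)]

lemma Fin.val_add_one_eq_iff [NeZero k] {i j : Fin k} : (i.val + 1) % k = j.val ↔ j = i + 1 := by
  rw [Fin.ext_iff, Fin.val_add, Fin.val_one', Nat.add_mod_mod, eq_comm]

lemma Fin.ofNat_add_one [NeZero k] (j : ℕ) : Fin.ofNat k (j + 1) = Fin.ofNat k j + 1 := by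
  simp [Fin.ext_iff, Fin.val_add, Nat.add_mod]

end FinCycle

namespace Zagreb

section SimpleGraph

variable {α : Type*} {H : SimpleGraph α}

lemma degree_eq_sum_ite_adj [Fintype α] (w : α) :
    H.degree w = ∑ x, if H.Adj w x then 1 else 0 := by
  rw [← H.card_neighborFinset_eq_degree, H.neighborFinset_eq_filter, Finset.card_filter]

lemma reachable_induce_of_adj_succ {s : Set α} (f : ℕ → α)
    (hf : ∀ i, H.Adj (f i) (f (i + 1))) {a b : ℕ} (hab : a ≤ b)
    (hs : ∀ i, a ≤ i → i ≤ b → f i ∈ s) :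
    (H.induce s).Reachable ⟨f a, hs a le_rfl hab⟩ ⟨f b, hs b hab le_rfl⟩ := by
  induction b, hab using Nat.le_induction with
  | base => rfl
  | succ b hab ih =>
    exact (ih fun i h1 h2 => hs i h1 (by omega)).trans (SimpleGraph.Adj.reachable (hf b))

lemma not_connected_of_adj_closed (T : Set α) (hT : ∀ x y, H.Adj x y → x ∈ T → y ∈ T)
    {x y : α} (hx : x ∈ T) (hy : y ∉ T) : ¬ H.Connected := by
  intro hc
  obtain ⟨p⟩ := hc.preconnected x y
  induction p with
  | nil => exact hy hx
  | cons h p ih => exact ih (hT _ _ h hx) hy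

lemma connected_of_connected_induce_compl_singleton {v w : α}
    (h : (H.induce {v}ᶜ).Connected) (hvw : H.Adj v w) : H.Connected := by
  have hw : w ∈ ({v}ᶜ : Set α) := hvw.ne'
  have key (x : α) : H.Reachable x w := by
    by_cases hx : x = v
    · exact hx ▸ hvw.reachable
    · exact (h.preconnected ⟨x, hx⟩ ⟨w, hw⟩).map (SimpleGraph.Embedding.induce _).toHom
  exact (H.connected_iff_exists_forall_reachable).mpr ⟨w, fun x => (key x).symm⟩

end SimpleGraph

section LineCut

variable {V : Type*} (G : SimpleGraph V)

@[simp] lemma lineCutGraph_adj_inl_inl {e f : G.edgeSet} :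
    (lineCutGraph G).Adj (.inl e) (.inl f) ↔
      e ≠ f ∧ ∃ v, v ∈ (e : Sym2 V) ∧ v ∈ (f : Sym2 V) := .rfl

@[simp] lemma lineCutGraph_adj_inl_inr {e : G.edgeSet} {c : {v // IsCutVertex G v}} :
    (lineCutGraph G).Adj (.inl e) (.inr c) ↔ (c : V) ∈ (e : Sym2 V) := .rfl

@[simp] lemma lineCutGraph_adj_inr_inl {e : G.edgeSet} {c : {v // IsCutVertex G v}} :
    (lineCutGraph G).Adj (.inr c) (.inl e) ↔ (c : V) ∈ (e : Sym2 V) := .rfl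

@[simp] lemma lineCutGraph_not_adj_inr_inr {c d : {v // IsCutVertex G v}} :
    ¬ (lineCutGraph G).Adj (.inr c) (.inr d) := id

lemma card_filter_mem_edgeSet [Fintype V] (v : V) :
    #{e : G.edgeSet | v ∈ (e : Sym2 V)} = G.degree v := by
  rw [← G.card_incidenceSet_eq_degree, ← Fintype.card_subtype]
  exact Fintype.card_congr (Equiv.subtypeSubtypeEquivSubtypeInter (· ∈ G.edgeSet) (v ∈ ·))

lemma degree_lineCutGraph_inl [Fintype V] (e : G.edgeSet) :
    (lineCutGraph G).degree (.inl e) + 2 =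
      ∑ v with v ∈ (e : Sym2 V), (G.degree v + if IsCutVertex G v then 1 else 0) := by
  obtain ⟨e, he⟩ := e
  induction e using Sym2.ind with | h u v => ?_
  have huv : u ≠ v := G.ne_of_adj he
  have hpair : ({w | w ∈ s(u, v)} : Finset V) = {u, v} := by ext; simp
  -- two distinct edges share at most one endpoint, so `u ∈ f ∧ v ∈ f` forces `f = e`
  have hline (f : G.edgeSet) :
      (if (lineCutGraph G).Adj (.inl ⟨s(u, v), he⟩) (.inl f) then 1 else 0) +
          2 * (if f = ⟨s(u, v), he⟩ then 1 else 0) =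
        (if u ∈ (f : Sym2 V) then 1 else 0) + (if v ∈ (f : Sym2 V) then 1 else 0) := by
    have hboth := Sym2.mem_and_mem_iff (z := (f : Sym2 V)) huv
    simp only [lineCutGraph_adj_inl_inl, Subtype.ext_iff]
    by_cases hu : u ∈ (f : Sym2 V) <;> by_cases hv : v ∈ (f : Sym2 V) <;>
      simp_all [eq_comm, Subtype.ext_iff]
  have hcut : (∑ c : {v // IsCutVertex G v},
        if (lineCutGraph G).Adj (.inl ⟨s(u, v), he⟩) (.inr c) then 1 else 0) =
      (if IsCutVertex G u then 1 else 0) + (if IsCutVertex G v then 1 else 0) := by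
    simp only [lineCutGraph_adj_inl_inr, Sym2.mem_iff]
    rw [← Finset.sum_subtype {w | IsCutVertex G w} (fun _ => by simp)
      (fun w => if w = u ∨ w = v then 1 else 0), Finset.sum_filter]
    rw [← Finset.sum_pair huv (f := fun w => if IsCutVertex G w then 1 else 0),
      ← Finset.univ_inter {u, v}, ← Finset.sum_ite_mem]
    refine Finset.sum_congr rfl fun w _ => ?_
    by_cases hw : w = u ∨ w = v <;> simp [hw]
  have hline_sum := Finset.sum_congr rfl fun f (_ : f ∈ univ) => hline f
  rw [Finset.sum_add_distrib, Finset.sum_add_distrib, ← Finset.mul_sum] at hline_sum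
  simp only [Finset.sum_ite_eq', Finset.mem_univ, if_true, ← Finset.card_filter,
    card_filter_mem_edgeSet] at hline_sum
  rw [degree_eq_sum_ite_adj, Fintype.sum_sum_type, hcut, hpair, Finset.sum_pair huv,
    ← Finset.card_filter]
  omega

lemma degree_lineCutGraph_inr [Fintype V] (c : {v // IsCutVertex G v}) :
    (lineCutGraph G).degree (.inr c) = G.degree c := by
  rw [degree_eq_sum_ite_adj, Fintype.sum_sum_type]
  simp only [lineCutGraph_adj_inr_inl, lineCutGraph_not_adj_inr_inr, if_false,
    Finset.sum_const_zero, add_zero]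
  rw [← Finset.card_filter, card_filter_mem_edgeSet]

lemma sum_edgeSet_sum_mem [Fintype V] (f : V → ℕ) :
    ∑ e : G.edgeSet, ∑ v with v ∈ (e : Sym2 V), f v = ∑ v, G.degree v * f v := by
  simp_rw [Finset.sum_filter]
  rw [Finset.sum_comm]
  refine Finset.sum_congr rfl fun v _ => ?_
  rw [← card_filter_mem_edgeSet, Finset.card_filter, Finset.sum_mul]
  exact Finset.sum_congr rfl fun e _ => by split_ifs <;> simp

theorem card_edgeFinset_lineCutGraph [Fintype V] :
    2 * #(lineCutGraph G).edgeFinset + 2 * #G.edgeFinset =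
      M1 G + 2 * ∑ v with IsCutVertex G v, G.degree v := by
  have hedges : ∑ e : G.edgeSet, (lineCutGraph G).degree (.inl e) + 2 * #G.edgeFinset =
      M1 G + ∑ v with IsCutVertex G v, G.degree v := by
    rw [G.edgeFinset_card, mul_comm, ← smul_eq_mul, ← Finset.card_univ, ← Finset.sum_const,
      ← Finset.sum_add_distrib]
    simp only [degree_lineCutGraph_inl]
    rw [sum_edgeSet_sum_mem]
    simp only [mul_add, Finset.sum_add_distrib, M1, sq, mul_ite, mul_one, mul_zero,
      ← Finset.sum_filter]
  have hcuts : ∑ c : {v // IsCutVertex G v}, (lineCutGraph G).degree (.inr c) =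
      ∑ v with IsCutVertex G v, G.degree v := by
    simp only [degree_lineCutGraph_inr]
    exact (Finset.sum_subtype {v | IsCutVertex G v} (fun _ => Finset.mem_filter_univ _)
      (fun v => G.degree v)).symm
  rw [← (lineCutGraph G).sum_degrees_eq_twice_card_edges, Fintype.sum_sum_type]
  omega

end LineCut

section Subdivision

variable {V : Type*} (G : SimpleGraph V)

@[simp] lemma subdivision_adj_inl_inr {v : V} {e : G.edgeSet} :
    (subdivision G).Adj (.inl v) (.inr e) ↔ v ∈ (e : Sym2 V) := .rfl

@[simp] lemma subdivision_adj_inr_inl {v : V} {e : G.edgeSet} :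
    (subdivision G).Adj (.inr e) (.inl v) ↔ v ∈ (e : Sym2 V) := .rfl

@[simp] lemma subdivision_not_adj_inl_inl {v w : V} : ¬ (subdivision G).Adj (.inl v) (.inl w) := id

@[simp] lemma subdivision_not_adj_inr_inr {e f : G.edgeSet} :
    ¬ (subdivision G).Adj (.inr e) (.inr f) := id

variable [Fintype V]

lemma degree_subdivision_inl (v : V) : (subdivision G).degree (.inl v) = G.degree v := by
  rw [degree_eq_sum_ite_adj, Fintype.sum_sum_type]
  simp only [subdivision_not_adj_inl_inl, subdivision_adj_inl_inr, if_false,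
    Finset.sum_const_zero, zero_add]
  rw [← Finset.card_filter, card_filter_mem_edgeSet]

lemma degree_subdivision_inr (e : G.edgeSet) : (subdivision G).degree (.inr e) = 2 := by
  obtain ⟨e, he⟩ := e
  induction e using Sym2.ind with | h u v => ?_
  rw [degree_eq_sum_ite_adj, Fintype.sum_sum_type]
  simp only [subdivision_not_adj_inr_inr, subdivision_adj_inr_inl, if_false,
    Finset.sum_const_zero, add_zero]
  rw [← Finset.card_filter, show ({w | w ∈ s(u, v)} : Finset V) = {u, v} by ext; simp,
    Finset.card_pair (G.ne_of_adj he)]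

lemma card_edgeFinset_subdivision :
    #(subdivision G).edgeFinset = 2 * #G.edgeFinset := by
  have h := (subdivision G).sum_degrees_eq_twice_card_edges
  simp only [Fintype.sum_sum_type, degree_subdivision_inl, degree_subdivision_inr,
    G.sum_degrees_eq_twice_card_edges, Finset.sum_const, Finset.card_univ, smul_eq_mul,
    ← G.edgeFinset_card] at h
  omega

lemma M1_subdivision : M1 (subdivision G) = M1 G + 4 * #G.edgeFinset := by
  simp only [M1, Fintype.sum_sum_type, degree_subdivision_inl, degree_subdivision_inr,
    Finset.sum_const, Finset.card_univ, smul_eq_mul, ← G.edgeFinset_card]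
  ring

end Subdivision

section CycleStar

variable {k l : ℕ}

@[simp] lemma cycleStar_adj_inl_inl [NeZero k] {i j : Fin k} :
    (cycleStar k l).Adj (.inl i) (.inl j) ↔ i ≠ j ∧ (j = i + 1 ∨ i = j + 1) := by
  simp only [cycleStar, Fin.val_add_one_eq_iff]

@[simp] lemma cycleStar_adj_inl_inr [NeZero k] {i : Fin k} {a : Fin l} :
    (cycleStar k l).Adj (.inl i) (.inr a) ↔ i = 0 := Fin.val_eq_zero_iff

@[simp] lemma cycleStar_adj_inr_inl [NeZero k] {i : Fin k} {a : Fin l} :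
    (cycleStar k l).Adj (.inr a) (.inl i) ↔ i = 0 := Fin.val_eq_zero_iff

@[simp] lemma cycleStar_not_adj_inr_inr {a b : Fin l} :
    ¬ (cycleStar k l).Adj (.inr a) (.inr b) := id

def pendantEdge [NeZero k] (a : Fin l) : (cycleStar k l).edgeSet :=
  ⟨s(.inl 0, .inr a), by simp⟩

lemma pendantEdge_injective [NeZero k] : Function.Injective (pendantEdge (k := k) (l := l)) := by
  intro a b h
  simpa [pendantEdge] using h

lemma degree_cycleStar_inr [NeZero k] (a : Fin l) : (cycleStar k l).degree (.inr a) = 1 := by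
  rw [degree_eq_sum_ite_adj, Fintype.sum_sum_type]
  simp

variable [Fact (3 ≤ k)]

lemma degree_cycleStar_inl (i : Fin k) :
    (cycleStar k l).degree (.inl i) = 2 + if i = 0 then l else 0 := by
  have hne : i + 1 ≠ i - 1 := fun h =>
    Fin.two_ne_zero_of_three_le (by open Fin.CommRing in linear_combination h)
  have hcycle :
      ({j | i ≠ j ∧ (j = i + 1 ∨ i = j + 1)} : Finset (Fin k)) = {i + 1, i - 1} := by
    ext j
    simp only [Finset.mem_filter, Finset.mem_univ, true_and, Finset.mem_insert,
      Finset.mem_singleton, eq_sub_iff_add_eq, eq_comm (a := i)]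
    constructor
    · exact fun h => h.2
    · rintro (rfl | rfl)
      · exact ⟨left_ne_add.mpr Fin.one_ne_zero_of_three_le, Or.inl rfl⟩
      · exact ⟨add_ne_left.mpr Fin.one_ne_zero_of_three_le, Or.inr rfl⟩
  rw [degree_eq_sum_ite_adj, Fintype.sum_sum_type]
  simp only [cycleStar_adj_inl_inl, cycleStar_adj_inl_inr, ← Finset.card_filter, hcycle,
    Finset.card_pair hne]
  by_cases h : i = 0 <;> simp [h]

lemma M1_cycleStar : M1 (cycleStar k l) = l ^ 2 + 5 * l + 4 * k := by
  have hsq (i : Fin k) :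
      (2 + if i = 0 then l else 0) ^ 2 = 4 + if i = 0 then l ^ 2 + 4 * l else 0 := by
    split_ifs <;> ring
  simp only [M1, Fintype.sum_sum_type, degree_cycleStar_inl, degree_cycleStar_inr, hsq,
    Finset.sum_add_distrib, Finset.sum_ite_eq', Finset.mem_univ, if_true, Finset.sum_const,
    Finset.card_univ, Fintype.card_fin, smul_eq_mul]
  ring

lemma card_edgeFinset_cycleStar : #(cycleStar k l).edgeFinset = k + l := by
  have h := (cycleStar k l).sum_degrees_eq_twice_card_edges
  simp only [Fintype.sum_sum_type, degree_cycleStar_inl, degree_cycleStar_inr,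
    Finset.sum_add_distrib, Finset.sum_ite_eq', Finset.mem_univ, if_true, Finset.sum_const,
    Finset.card_univ, Fintype.card_fin, smul_eq_mul] at h
  omega

def cycleEdge (i : Fin k) : (cycleStar k l).edgeSet :=
  ⟨s(.inl i, .inl (i + 1)),
    (cycleStar_adj_inl_inl (l := l)).mpr
      ⟨left_ne_add.mpr (Fin.one_ne_zero_of_three_le (k := k)), .inl rfl⟩⟩

lemma cycleEdge_injective : Function.Injective (cycleEdge (k := k) (l := l)) := by
  intro i j h
  replace h := congrArg Subtype.val h
  simp only [cycleEdge, Sym2.eq_iff, Sum.inl.injEq] at h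
  rcases h with ⟨h, -⟩ | ⟨rfl, h⟩
  · exact h
  · exact absurd (by open Fin.CommRing in linear_combination h) Fin.two_ne_zero_of_three_le

lemma cycleEdge_ne_pendantEdge (i : Fin k) (a : Fin l) : cycleEdge i ≠ pendantEdge a := by
  simp [cycleEdge, pendantEdge, Subtype.ext_iff]

lemma exists_eq_cycleEdge_or_exists_eq_pendantEdge (e : (cycleStar k l).edgeSet) :
    (∃ i, e = cycleEdge i) ∨ ∃ a, e = pendantEdge a := by
  obtain ⟨e, he⟩ := e
  induction e using Sym2.ind with | h u v => ?_
  rw [SimpleGraph.mem_edgeSet] at he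
  rcases u with i | a <;> rcases v with j | b
  · obtain ⟨-, rfl | rfl⟩ := cycleStar_adj_inl_inl.mp he
    · exact .inl ⟨i, rfl⟩
    · exact .inl ⟨j, Subtype.ext Sym2.eq_swap⟩
  · obtain rfl := cycleStar_adj_inl_inr.mp he
    exact .inr ⟨b, rfl⟩
  · obtain rfl := cycleStar_adj_inr_inl.mp he
    exact .inr ⟨a, Subtype.ext Sym2.eq_swap⟩
  · exact absurd he cycleStar_not_adj_inr_inr

lemma inr_mem_iff_eq_pendantEdge (e : (cycleStar k l).edgeSet) (a : Fin l) :
    (.inr a : Fin k ⊕ Fin l) ∈ (e : Sym2 _) ↔ e = pendantEdge a := by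
  rcases exists_eq_cycleEdge_or_exists_eq_pendantEdge e with ⟨i, rfl⟩ | ⟨b, rfl⟩
  · rw [iff_false_intro (cycleEdge_ne_pendantEdge i a)]
    simp [cycleEdge]
  · simp [pendantEdge, eq_comm]

def subdividedCycle (x : ℕ) : (Fin k ⊕ Fin l) ⊕ (cycleStar k l).edgeSet :=
  if x % 2 = 0 then .inl (.inl (Fin.ofNat k (x / 2))) else .inr (cycleEdge (Fin.ofNat k (x / 2)))

lemma subdividedCycle_two_mul (j : ℕ) :
    subdividedCycle (l := l) (2 * j) = .inl (.inl (Fin.ofNat k j)) := by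
  simp [subdividedCycle]

lemma subdividedCycle_two_mul_add_one (j : ℕ) :
    subdividedCycle (l := l) (2 * j + 1) = .inr (cycleEdge (Fin.ofNat k j)) := by
  simp [subdividedCycle, Nat.add_mod, Nat.add_div]

lemma subdividedCycle_two_mul_k : subdividedCycle (k := k) (l := l) (2 * k) = .inl (.inl 0) := by
  simp [subdividedCycle_two_mul]

lemma subdivision_adj_subdividedCycle (x : ℕ) :
    (subdivision (cycleStar k l)).Adj (subdividedCycle x) (subdividedCycle (x + 1)) := by
  obtain ⟨j, rfl | rfl⟩ := Nat.even_or_odd' x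
  · simp [subdividedCycle_two_mul, subdividedCycle_two_mul_add_one, cycleEdge]
  · rw [show 2 * j + 1 + 1 = 2 * (j + 1) by ring, subdividedCycle_two_mul,
      subdividedCycle_two_mul_add_one, Fin.ofNat_add_one]
    simp [cycleEdge]

lemma subdividedCycle_injOn {x y : ℕ} (hx : x < 2 * k) (hy : y < 2 * k)
    (h : subdividedCycle (k := k) (l := l) x = subdividedCycle y) : x = y := by
  obtain ⟨i, rfl | rfl⟩ := Nat.even_or_odd' x <;>
    obtain ⟨j, rfl | rfl⟩ := Nat.even_or_odd' y <;>
    simp only [subdividedCycle_two_mul, subdividedCycle_two_mul_add_one, reduceCtorEq,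
      Sum.inl.injEq, Sum.inr.injEq, (cycleEdge_injective (k := k) (l := l)).eq_iff] at h
  all_goals
    replace h := congrArg Fin.val h
    rw [Fin.val_ofNat, Fin.val_ofNat, Nat.mod_eq_of_lt (by omega), Nat.mod_eq_of_lt (by omega)] at h
    omega

lemma exists_subdividedCycle_eq_iff {v₀ : (Fin k ⊕ Fin l) ⊕ (cycleStar k l).edgeSet}
    (hv₀ : v₀ ≠ .inl (.inl 0)) :
    ∃ p, ∀ x ≤ 2 * k, subdividedCycle x = v₀ ↔ x = p := by
  by_cases h : ∃ p < 2 * k, subdividedCycle p = v₀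
  · obtain ⟨p, hp, rfl⟩ := h
    refine ⟨p, fun x hx => ⟨fun h => ?_, fun h => h ▸ rfl⟩⟩
    rcases hx.lt_or_eq with hx | rfl
    · exact subdividedCycle_injOn hx hp h
    · exact absurd (subdividedCycle_two_mul_k.symm.trans h).symm hv₀
  · simp only [not_exists, not_and] at h
    refine ⟨2 * k + 1, fun x hx => iff_of_false ?_ (by omega)⟩
    rcases hx.lt_or_eq with hx | rfl
    · exact h x hx
    · exact (subdividedCycle_two_mul_k (k := k) (l := l)).symm ▸ hv₀.symm

-- `p` is the position of `v₀` on the subdivided cycle (`2k + 1` if `v₀` is not on it); the arcs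
-- `[0, p)` and `(p, 2k]` avoid `v₀` and both end at the centre.
lemma reachable_induce_compl_subdividedCycle {v₀ : (Fin k ⊕ Fin l) ⊕ (cycleStar k l).edgeSet}
    (hv₀ : .inl (.inl 0) ∈ ({v₀}ᶜ : Set _)) {p : ℕ}
    (hp : ∀ x ≤ 2 * k, subdividedCycle x = v₀ ↔ x = p) {x : ℕ} (hx : x ≤ 2 * k)
    (hxv : subdividedCycle x ∈ ({v₀}ᶜ : Set _)) :
    ((subdivision (cycleStar k l)).induce {v₀}ᶜ).Reachable ⟨_, hxv⟩ ⟨_, hv₀⟩ := by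
  have hxp : x ≠ p := fun h => hxv ((hp x hx).mpr h)
  rcases hxp.lt_or_gt with hlt | hgt
  · have h := reachable_induce_of_adj_succ (s := {v₀}ᶜ) _ subdivision_adj_subdividedCycle
      (Nat.zero_le x) fun i _ hi h => by have := (hp i (by omega)).mp h; omega
    convert h.symm using 2
    simpa using (subdividedCycle_two_mul (k := k) (l := l) 0).symm
  · have h := reachable_induce_of_adj_succ (s := {v₀}ᶜ) _ subdivision_adj_subdividedCycle
      hx fun i hi _ h => by have := (hp i (by omega)).mp h; omega
    convert h using 2
    exact subdividedCycle_two_mul_k.symm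

lemma connected_induce_compl_subdivision_cycleStar
    {v₀ : (Fin k ⊕ Fin l) ⊕ (cycleStar k l).edgeSet} (hv₀ : v₀ ≠ .inl (.inl 0))
    (hpend : ∀ a, v₀ ≠ .inr (pendantEdge a)) :
    ((subdivision (cycleStar k l)).induce {v₀}ᶜ).Connected := by
  obtain ⟨p, hp⟩ := exists_subdividedCycle_eq_iff hv₀
  have hc : .inl (.inl 0) ∈ ({v₀}ᶜ : Set _) := hv₀.symm
  have hcycle {w} (hw : w ∈ ({v₀}ᶜ : Set _)) (x : ℕ) (hx : x < 2 * k)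
      (hxw : subdividedCycle x = w) :
      ((subdivision (cycleStar k l)).induce {v₀}ᶜ).Reachable ⟨w, hw⟩ ⟨_, hc⟩ := by
    subst hxw
    exact reachable_induce_compl_subdividedCycle hc hp hx.le hw
  have hpendant (a : Fin l) :
      ((subdivision (cycleStar k l)).induce {v₀}ᶜ).Reachable
        ⟨.inr (pendantEdge a), (hpend a).symm⟩ ⟨_, hc⟩ :=
    SimpleGraph.Adj.reachable (by simp [pendantEdge])
  refine (SimpleGraph.connected_iff_exists_forall_reachable _).mpr ⟨⟨_, hc⟩, ?_⟩
  rintro ⟨w, hw⟩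
  refine SimpleGraph.Reachable.symm ?_
  rcases w with (i | a) | e
  · exact hcycle hw (2 * i) (by omega) (by rw [subdividedCycle_two_mul, Fin.ofNat_val_eq_self])
  · refine SimpleGraph.Reachable.trans (SimpleGraph.Adj.reachable ?_) (hpendant a)
    simp [pendantEdge]
  · rcases exists_eq_cycleEdge_or_exists_eq_pendantEdge e with ⟨i, rfl⟩ | ⟨a, rfl⟩
    · exact hcycle hw (2 * i + 1) (by omega)
        (by rw [subdividedCycle_two_mul_add_one, Fin.ofNat_val_eq_self])
    · exact hpendant a

variable [NeZero l]

lemma connected_subdivision_cycleStar : (subdivision (cycleStar k l)).Connected :=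
  connected_of_connected_induce_compl_singleton
    (connected_induce_compl_subdivision_cycleStar (v₀ := .inl (.inr 0)) (by simp) (by simp))
    (w := .inr (pendantEdge 0)) (by simp [pendantEdge])

-- The leaves and pendant edges form a union of components once the centre is removed.
lemma isCutVertex_center : IsCutVertex (subdivision (cycleStar k l)) (.inl (.inl 0)) := by
  refine ⟨connected_subdivision_cycleStar, not_connected_of_adj_closed
    {w | (∃ a, w.1 = .inl (.inr a)) ∨ ∃ a, w.1 = .inr (pendantEdge a)} ?_
    (x := ⟨.inl (.inr 0), by simp⟩) (.inl ⟨0, rfl⟩)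
    (y := ⟨.inl (.inl 1), by simpa using Fin.one_ne_zero_of_three_le (k := k)⟩) (by simp)⟩
  rintro ⟨x, hx⟩ ⟨(v | e), hy⟩ hxy (⟨a, rfl⟩ | ⟨a, rfl⟩) <;>
    rw [SimpleGraph.induce_adj] at hxy
  · exact (subdivision_not_adj_inl_inl _ hxy).elim
  · rcases Sym2.mem_iff.mp (show v ∈ s(.inl 0, .inr a) from hxy) with rfl | rfl
    · exact absurd rfl hy
    · exact .inl ⟨a, rfl⟩
  · exact .inr ⟨a, congrArg _ ((inr_mem_iff_eq_pendantEdge e a).mp hxy)⟩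
  · exact (subdivision_not_adj_inr_inr _ hxy).elim

lemma isCutVertex_pendantEdge (a : Fin l) :
    IsCutVertex (subdivision (cycleStar k l)) (.inr (pendantEdge a)) := by
  refine ⟨connected_subdivision_cycleStar, not_connected_of_adj_closed
    {w | w.1 = .inl (.inr a)} ?_ (x := ⟨.inl (.inr a), by simp⟩) rfl
    (y := ⟨.inl (.inl 0), by simp⟩) (by simp)⟩
  rintro ⟨x, hx⟩ ⟨(v | e), hy⟩ hxy rfl <;>
    rw [SimpleGraph.induce_adj] at hxy
  · exact (subdivision_not_adj_inl_inl _ hxy).elim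
  · exact absurd (congrArg _ ((inr_mem_iff_eq_pendantEdge e a).mp hxy)) hy

lemma isCutVertex_subdivision_cycleStar_iff (w : (Fin k ⊕ Fin l) ⊕ (cycleStar k l).edgeSet) :
    IsCutVertex (subdivision (cycleStar k l)) w ↔
      w = .inl (.inl 0) ∨ ∃ a, w = .inr (pendantEdge a) := by
  refine ⟨fun hw => ?_, ?_⟩
  · by_contra h
    simp only [not_or, not_exists] at h
    exact hw.2 (connected_induce_compl_subdivision_cycleStar h.1 h.2)
  · rintro (rfl | ⟨a, rfl⟩)
    exacts [isCutVertex_center, isCutVertex_pendantEdge a]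

lemma sum_degree_isCutVertex_subdivision_cycleStar :
    ∑ w with IsCutVertex (subdivision (cycleStar k l)) w,
      (subdivision (cycleStar k l)).degree w = 3 * l + 2 := by
  have hcut : ({w | IsCutVertex (subdivision (cycleStar k l)) w} : Finset _) =
      insert (.inl (.inl 0)) (univ.image fun a => .inr (pendantEdge a)) := by
    ext w
    simp [isCutVertex_subdivision_cycleStar_iff, eq_comm]
  rw [hcut, Finset.sum_insert (by simp),
    Finset.sum_image fun a _ b _ h => pendantEdge_injective (Sum.inr_injective h)]
  simp [degree_subdivision_inl, degree_subdivision_inr, degree_cycleStar_inl]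
  ring

theorem card_edgeFinset_lineCutGraph_subdivision_cycleStar :
    2 * #(lineCutGraph (subdivision (cycleStar k l))).edgeFinset = l ^ 2 + 11 * l + 4 * k + 4 := by
  have h := card_edgeFinset_lineCutGraph (subdivision (cycleStar k l))
  rw [card_edgeFinset_subdivision, M1_subdivision, M1_cycleStar, card_edgeFinset_cycleStar,
    sum_degree_isCutVertex_subdivision_cycleStar] at h
  linarith

end CycleStar

end Zagreb

open Zagreb in
theorem stmt12 (n k : ℕ) (hk : 3 ≤ k) (hn : k + 1 ≤ n) :
    ((lineCutGraph (subdivision (cycleStar k (n - k)))).edgeFinset.card : ℚ) =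
      ((n : ℚ) ^ 2 + (k : ℚ) ^ 2 + 11 * n - 7 * k - 2 * n * k + 4) / 2 := by
  have : Fact (3 ≤ k) := ⟨hk⟩
  have : NeZero (n - k) := ⟨by omega⟩
  have hcount : (2 * #(lineCutGraph (subdivision (cycleStar k (n - k)))).edgeFinset : ℚ) =
      ((n - k : ℕ) : ℚ) ^ 2 + 11 * (n - k : ℕ) + 4 * k + 4 := by
    exact_mod_cast card_edgeFinset_lineCutGraph_subdivision_cycleStar
  rw [Nat.cast_sub (by omega)] at hcount
  linear_combination hcount / 2
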